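/- Let n ≥ 2, let a ∈ C(ℝⁿ) ∩ C^∞(ℝⁿ∖{0}) be positively homogeneous of degree one with a(ξ) > 0 for ξ ≠ 0, and let ρ ≥ 1 be a real number. There exists a constant C > 0 such that for all nonzero ξ, ζ ∈ ℝⁿ, | a(ζ)^{ρ} / a(ξ)^{ρ} − 1 | ≤ C ( a(ζ)^{ρ−1} / a(ξ)^{ρ} + 1 / a(ξ) ) |ξ − ζ|. -/

import Mathlib

open MeasureTheory Real Complex RealInnerProductSpace

noncomputable section

/-- Fourier transform with convention `(2π)^(-n/2) ∫ e^(-ix·ξ) f(x) dx`. -/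
def FT (n : ℕ) (f : EuclideanSpace ℝ (Fin n) → ℂ) (ξ : EuclideanSpace ℝ (Fin n)) : ℂ :=
  ((2 * π) ^ (-(n : ℝ) / 2) : ℝ) •
    ∫ x : EuclideanSpace ℝ (Fin n), Complex.exp (-Complex.I * ((⟪x, ξ⟫ : ℝ) : ℂ)) * f x

/-- Inverse Fourier transform. -/
def IFT (n : ℕ) (F : EuclideanSpace ℝ (Fin n) → ℂ) (x : EuclideanSpace ℝ (Fin n)) : ℂ :=
  ((2 * π) ^ (-(n : ℝ) / 2) : ℝ) •
    ∫ ξ : EuclideanSpace ℝ (Fin n), Complex.exp (Complex.I * ((⟪x, ξ⟫ : ℝ) : ℂ)) * F ξ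

/-- Fourier multiplier with symbol `q`: `q(D_x) f = IFT (q · FT f)`. -/
def mult (n : ℕ) (q : EuclideanSpace ℝ (Fin n) → ℂ) (f : EuclideanSpace ℝ (Fin n) → ℂ) :
    EuclideanSpace ℝ (Fin n) → ℂ :=
  IFT n fun ξ => q ξ * FT n f ξ

/-- Mean value bound for real powers: for `A, B > 0` and `ρ ≥ 1`,
`|B^ρ - A^ρ| ≤ ρ (A^(ρ-1) + B^(ρ-1)) |B - A|`. -/
theorem aux_rpow_diff_bound (ρ : ℝ) (hρ : 1 ≤ ρ) {A B : ℝ} (hA : 0 < A) (hB : 0 < B) :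
    |B ^ ρ - A ^ ρ| ≤ ρ * (A ^ (ρ-1) + B ^ (ρ-1)) * |B - A| := by
  have hρ0 : 0 < ρ := lt_of_lt_of_le one_pos hρ
  have key : ∀ x ∈ Set.uIcc A B, HasDerivWithinAt (fun x : ℝ => x ^ ρ)
      (ρ * x ^ (ρ - 1)) (Set.uIcc A B) x := by
    intro x hx
    rw [Set.mem_uIcc] at hx
    have hx0 : x ≠ 0 := by rcases hx with h | h <;> nlinarith
    exact (Real.hasDerivAt_rpow_const (Or.inl hx0)).hasDerivWithinAt
  have bd : ∀ x ∈ Set.uIcc A B, ‖ρ * x ^ (ρ - 1)‖ ≤ ρ * (A ^ (ρ-1) + B ^ (ρ-1)) := by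
    intro x hx
    rw [Set.mem_uIcc] at hx
    have hx0 : 0 < x := by rcases hx with h | h <;> nlinarith
    have hxle : x ^ (ρ-1) ≤ A ^ (ρ-1) + B ^ (ρ-1) := by
      rcases hx with h | h
      · have : x ^ (ρ-1) ≤ B ^ (ρ-1) := Real.rpow_le_rpow hx0.le h.2 (by linarith)
        have hA' : 0 ≤ A ^ (ρ-1) := by positivity
        linarith
      · have : x ^ (ρ-1) ≤ A ^ (ρ-1) := Real.rpow_le_rpow hx0.le h.2 (by linarith)
        have hB' : 0 ≤ B ^ (ρ-1) := by positivity
        linarith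
    rw [Real.norm_eq_abs, abs_mul, abs_of_pos hρ0,
      _root_.abs_of_nonneg (by positivity : (0:ℝ) ≤ x ^ (ρ-1))]
    exact mul_le_mul_of_nonneg_left hxle hρ0.le
  have := (convex_uIcc A B).norm_image_sub_le_of_norm_hasDerivWithin_le key bd
    Set.right_mem_uIcc Set.left_mem_uIcc
  rw [abs_sub_comm, abs_sub_comm B A]
  simpa [Real.norm_eq_abs] using this

theorem symbol_ratio_bound (n : ℕ) (hn : 2 ≤ n)
    (a : EuclideanSpace ℝ (Fin n) → ℝ)
    (ha_cont : Continuous a)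
    (ha_smooth : ContDiffOn ℝ (⊤ : ℕ∞) a {(0 : EuclideanSpace ℝ (Fin n))}ᶜ)
    (ha_hom : ∀ t : ℝ, 0 < t → ∀ ξ, a (t • ξ) = t * a ξ)
    (ha_pos : ∀ ξ : EuclideanSpace ℝ (Fin n), ξ ≠ 0 → 0 < a ξ)
    (ρ : ℝ) (hρ : 1 ≤ ρ) :
    ∃ C > 0, ∀ ξ ζ' : EuclideanSpace ℝ (Fin n), ξ ≠ 0 → ζ' ≠ 0 →
      |a ζ' ^ ρ / a ξ ^ ρ - 1| ≤
        C * (a ζ' ^ (ρ - 1) / a ξ ^ ρ + 1 / a ξ) * ‖ξ - ζ'‖ := by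
  have hρ0 : 0 < ρ := lt_of_lt_of_le one_pos hρ
  -- a is differentiable away from 0
  have hopen : IsOpen ({(0 : (EuclideanSpace ℝ (Fin n)))}ᶜ) := isOpen_compl_singleton
  have hdiff : ∀ x : (EuclideanSpace ℝ (Fin n)), x ≠ 0 → DifferentiableAt ℝ a x := by
    intro x hx
    exact (ha_smooth.contDiffAt (hopen.mem_nhds hx)).differentiableAt (by simp)
  have hcontd : ContinuousOn (fderiv ℝ a) ({(0:(EuclideanSpace ℝ (Fin n)))}ᶜ) :=
    ha_smooth.continuousOn_fderiv_of_isOpen hopen (by simp)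
  haveI : Nonempty (Fin n) := ⟨⟨0, by omega⟩⟩
  have hsub : Metric.sphere (0:(EuclideanSpace ℝ (Fin n))) 1 ⊆ ({(0:(EuclideanSpace ℝ (Fin n)))}ᶜ) := by
    intro x hx
    simp only [Metric.mem_sphere, dist_zero_right] at hx
    simp only [Set.mem_compl_iff, Set.mem_singleton_iff]
    intro h; rw [h] at hx; simp at hx
  obtain ⟨L, hL⟩ := (isCompact_sphere (0:(EuclideanSpace ℝ (Fin n))) 1).exists_bound_of_continuousOn
    (hcontd.mono hsub)
  -- homogeneity of the derivative
  have hfh : ∀ t : ℝ, 0 < t → ∀ u : (EuclideanSpace ℝ (Fin n)), u ≠ 0 → fderiv ℝ a (t • u) = fderiv ℝ a u := by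
    intro t ht u hu
    have htu : t • u ≠ 0 := smul_ne_zero (ne_of_gt ht) hu
    have h1 : HasFDerivAt a (fderiv ℝ a (t • u)) (t • u) := (hdiff _ htu).hasFDerivAt
    have hsm : HasFDerivAt (fun x : (EuclideanSpace ℝ (Fin n)) => t • x) (t • ContinuousLinearMap.id ℝ (EuclideanSpace ℝ (Fin n))) u := by
      exact (t • ContinuousLinearMap.id ℝ (EuclideanSpace ℝ (Fin n))).hasFDerivAt (x := u)
    have h2 : HasFDerivAt (fun x : (EuclideanSpace ℝ (Fin n)) => a (t • x))
        ((fderiv ℝ a (t • u)).comp (t • ContinuousLinearMap.id ℝ (EuclideanSpace ℝ (Fin n)))) u := h1.comp u hsm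
    have h3 : HasFDerivAt (fun x : (EuclideanSpace ℝ (Fin n)) => a (t • x)) (t • fderiv ℝ a u) u := by
      have : (fun x : (EuclideanSpace ℝ (Fin n)) => a (t • x)) = fun x : (EuclideanSpace ℝ (Fin n)) => t • a x := by
        funext x; simp [ha_hom t ht x, smul_eq_mul]
      rw [this]
      exact (hdiff u hu).hasFDerivAt.const_smul t
    have heq := h2.unique h3
    have hcomp : (fderiv ℝ a (t • u)).comp (t • ContinuousLinearMap.id ℝ (EuclideanSpace ℝ (Fin n)))
        = t • fderiv ℝ a (t • u) := by
      ext v; simp [_root_.map_smul]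
    rw [hcomp] at heq
    exact smul_right_injective _ (ne_of_gt ht) heq
  -- uniform bound for the derivative away from 0
  have hLbd : ∀ z : (EuclideanSpace ℝ (Fin n)), z ≠ 0 → ‖fderiv ℝ a z‖ ≤ L := by
    intro z hz
    have hnz : (0:ℝ) < ‖z‖ := norm_pos_iff.mpr hz
    have hu : ‖z‖⁻¹ • z ∈ Metric.sphere (0:(EuclideanSpace ℝ (Fin n))) 1 := by
      simp [norm_smul, abs_of_pos (inv_pos.mpr hnz), inv_mul_cancel₀ (ne_of_gt hnz)]
    have huz : (‖z‖⁻¹ • z : (EuclideanSpace ℝ (Fin n))) ≠ 0 := hsub hu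
    have h := hfh ‖z‖ hnz (‖z‖⁻¹ • z) huz
    rw [smul_inv_smul₀ (ne_of_gt hnz)] at h
    rw [h]; exact hL _ hu
  -- Lipschitz bound on segments avoiding 0
  have seg : ∀ x y : (EuclideanSpace ℝ (Fin n)), (0:(EuclideanSpace ℝ (Fin n))) ∉ segment ℝ x y → |a y - a x| ≤ L * ‖y - x‖ := by
    intro x y h0
    have key : ∀ z ∈ segment ℝ x y, HasFDerivWithinAt a (fderiv ℝ a z) (segment ℝ x y) z :=
      fun z hz => (hdiff z (fun h => h0 (h ▸ hz))).hasFDerivAt.hasFDerivWithinAt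
    have bd : ∀ z ∈ segment ℝ x y, ‖fderiv ℝ a z‖ ≤ L :=
      fun z hz => hLbd z (fun h => h0 (h ▸ hz))
    have := (convex_segment x y).norm_image_sub_le_of_norm_hasFDerivWithin_le key bd
      (left_mem_segment ℝ x y) (right_mem_segment ℝ x y)
    simpa [Real.norm_eq_abs] using this
  -- full Lipschitz bound
  have hlip : ∀ x y : (EuclideanSpace ℝ (Fin n)), |a y - a x| ≤ L * ‖y - x‖ := by
    intro x y
    by_cases hxy : x = y
    · simp [hxy]
    by_cases h0 : (0:(EuclideanSpace ℝ (Fin n))) ∉ segment ℝ x y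
    · exact seg x y h0
    push_neg at h0
    set W : Submodule ℝ (EuclideanSpace ℝ (Fin n)) := Submodule.span ℝ {y - x} with hW
    have hseg_sub : segment ℝ x y ⊆ (W : Set (EuclideanSpace ℝ (Fin n))) := by
      obtain ⟨s, t, hs, ht, hst, h⟩ := h0
      intro z hz
      obtain ⟨u, v, hu, hv, huv, hzeq⟩ := hz
      have hxW : x = (-t) • (y - x) := by
        have c1 : x = (s + t) • x := by rw [hst, one_smul]
        rw [add_smul] at c1
        have c2 : s • x = -(t • y) := by
          linear_combination (norm := module) h
        rw [c2] at c1
        rw [neg_smul, smul_sub]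
        linear_combination (norm := module) c1
      have hzeq' : z = (v - t) • (y - x) := by
        have hu' : u = 1 - v := by linarith
        rw [hu'] at hzeq
        have hz2 : z = x + v • (y - x) := by
          rw [← hzeq]; module
        rw [hz2]
        nth_rewrite 1 [hxW]
        module
      rw [hzeq']
      exact Submodule.smul_mem _ _ (Submodule.mem_span_singleton_self _)
    have hWne : W ≠ ⊤ := by
      intro htop
      have h2 : Module.finrank ℝ W = 1 :=
        finrank_span_singleton (sub_ne_zero.mpr (Ne.symm hxy))
      rw [htop, finrank_top] at h2
      have h1 : Module.finrank ℝ (EuclideanSpace ℝ (Fin n)) = n := by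
        simp [finrank_euclideanSpace]
      omega
    obtain ⟨v, hv⟩ : ∃ v : (EuclideanSpace ℝ (Fin n)), v ∉ W := by
      by_contra h; push_neg at h; exact hWne (Submodule.eq_top_iff'.mpr h)
    have hbound : ∀ ε : ℝ, 0 < ε → |a (y + ε • v) - a (x + ε • v)| ≤ L * ‖y - x‖ := by
      intro ε hε
      have h0' : (0:(EuclideanSpace ℝ (Fin n))) ∉ segment ℝ (x + ε • v) (y + ε • v) := by
        intro hmem
        obtain ⟨s, t, hs, ht, hst, h⟩ := hmem
        have hseg : (-ε) • v ∈ segment ℝ x y := by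
          refine ⟨s, t, hs, ht, hst, ?_⟩
          have hexp : s • x + t • y + ε • v = 0 := by
            have expand : s • (x + ε • v) + t • (y + ε • v)
                = s • x + t • y + (s + t) • (ε • v) := by module
            rw [expand, hst, one_smul] at h
            exact h
          linear_combination (norm := module) hexp
        have hmemW := hseg_sub hseg
        have hvW : v ∈ W := by
          have h2 := Submodule.smul_mem W (-ε)⁻¹ hmemW
          rwa [inv_smul_smul₀ (by simp [ne_of_gt hε]) v] at h2
        exact hv hvW
      have := seg _ _ h0'
      simpa using this
    have hcont : Filter.Tendsto (fun ε : ℝ => |a (y + ε • v) - a (x + ε • v)|)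
        (nhdsWithin 0 (Set.Ioi 0)) (nhds (|a y - a x|)) := by
      have c : Continuous (fun ε : ℝ => |a (y + ε • v) - a (x + ε • v)|) := by
        apply Continuous.abs
        exact ((ha_cont.comp (continuous_const.add (continuous_id.smul continuous_const))).sub (ha_cont.comp (continuous_const.add (continuous_id.smul continuous_const))))
      have h := (c.tendsto 0).mono_left (nhdsWithin_le_nhds (s := Set.Ioi (0:ℝ)))
      simpa using h
    exact le_of_tendsto hcont (Filter.eventually_iff_exists_mem.mpr
      ⟨Set.Ioi 0, self_mem_nhdsWithin, fun ε hε => hbound ε hε⟩)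
  -- assemble the final constant
  set M : ℝ := max L 1 with hM
  have hM1 : (1:ℝ) ≤ M := le_max_right _ _
  have hM0 : (0:ℝ) < M := lt_of_lt_of_le one_pos hM1
  refine ⟨ρ * M, by positivity, ?_⟩
  intro ξ ζ' hξ hζ
  have hA : 0 < a ξ := ha_pos ξ hξ
  have hB : 0 < a ζ' := ha_pos ζ' hζ
  set A := a ξ with hAdef
  set B := a ζ' with hBdef
  set D := ‖ξ - ζ'‖ with hDdef
  have hD0 : 0 ≤ D := norm_nonneg _
  have h2 : |B - A| ≤ M * D := by
    have := hlip ξ ζ'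
    have hn' : ‖ζ' - ξ‖ = D := by rw [hDdef, norm_sub_rev]
    rw [hn'] at this
    calc |B - A| ≤ L * D := this
      _ ≤ M * D := mul_le_mul_of_nonneg_right (le_max_left _ _) hD0
  have h1 := aux_rpow_diff_bound ρ hρ hA hB
  have h3 : |B ^ ρ - A ^ ρ| ≤ ρ * (A ^ (ρ-1) + B ^ (ρ-1)) * (M * D) :=
    h1.trans (mul_le_mul_of_nonneg_left h2 (by positivity))
  have hP : (0:ℝ) < A ^ ρ := Real.rpow_pos_of_pos hA ρ
  have hid : 1 / A = A ^ (ρ - 1) / A ^ ρ := by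
    rw [Real.rpow_sub hA, Real.rpow_one]
    field_simp
  have hlhs : B ^ ρ / A ^ ρ - 1 = (B ^ ρ - A ^ ρ) / A ^ ρ := by
    field_simp
  rw [hlhs, abs_div, abs_of_pos hP, hid]
  have hrhs : ρ * M * (B ^ (ρ - 1) / A ^ ρ + A ^ (ρ - 1) / A ^ ρ) * D
      = (ρ * (A ^ (ρ-1) + B ^ (ρ-1)) * (M * D)) / A ^ ρ := by
    field_simp; ring
  rw [hrhs]
  exact div_le_div_of_nonneg_right h3 hP.le |>.trans_eq rfl
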